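/- arXiv:2504.02238 — 7 statements merged into one kernel-verified Lean document; each statement's English description precedes it below -/
import Mathlib

section
/- Single-crossing of posterior asymmetries (Lemma 2). Let f_X be a density symmetric about its mean μ < 0 with log f_X strictly concave, and let f_ε and f_ε̃ be quasi-concave densities symmetric about 0 such that x ↦ f_ε(x)/f_ε̃(x) is strictly decreasing on (0,∞). Define the posterior densities at signal realization 0: p(x) := f_X(x)·f_ε̃(x) / ∫ f_X(u)·f_ε̃(u) du and q(x) := f_X(x)·f_ε(x) / ∫ f_X(u)·f_ε(u) du. Then there exists c > 0 such that for all x ∈ (0,c), (q(−x) − q(x)) − (p(−x) − p(x)) > 0, and for all x > c, (q(−x) − q(x)) − (p(−x) − p(x)) < 0. -/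
open MeasureTheory Real Set

noncomputable section

/-- A density: everywhere positive, continuously differentiable, integrates to 1,
with finite first absolute moment. -/
def IsDensity (f : ℝ → ℝ) : Prop :=
  (∀ x, 0 < f x) ∧ ContDiff ℝ 1 f ∧ (∫ x, f x) = 1 ∧
    MeasureTheory.Integrable (fun x => |x| * f x)

/-- `f` is symmetric about `m`. -/
def SymmAbout (m : ℝ) (f : ℝ → ℝ) : Prop := ∀ x, f (m + x) = f (m - x)

/-- `f` is quasi-concave. -/
def QuasiConcaveFn (f : ℝ → ℝ) : Prop :=
  ∀ x y t : ℝ, 0 ≤ t → t ≤ 1 → min (f x) (f y) ≤ f (t * x + (1 - t) * y)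

/-- `f` is log-concave. -/
def LogConcaveFn (f : ℝ → ℝ) : Prop := ConcaveOn ℝ Set.univ fun x => Real.log (f x)

/-- `g` is less precise than `f`: the ratio `g/f` is nondecreasing on `(0, ∞)`. -/
def LessPrecise (g f : ℝ → ℝ) : Prop := MonotoneOn (fun x => g x / f x) (Set.Ioi 0)

/-- Posterior mean at signal realization `s` under prior `fX` and noise density `fε`. -/
def postMean (fX fε : ℝ → ℝ) (s : ℝ) : ℝ :=
  (∫ x, x * fX x * fε (s - x)) / (∫ x, fX x * fε (s - x))

/-- Posterior density at signal realization 0, under prior `fX` and noise density `fn`. -/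
def postDensity0 (fX fn : ℝ → ℝ) (x : ℝ) : ℝ := fX x * fn x / ∫ u, fX u * fn u

/-!
For `x > 0` the symmetry of the noise densities factors the difference of posterior asymmetries as
`(f_X(-x) - f_X(x)) * (f_ε(x) / I - f_ε̃(x) / Ĩ)`, where `I` and `Ĩ` are the normalising constants
(finite, since a symmetric strictly log-concave `f_X` is bounded by `f_X(μ)`).
The first factor is positive: `f_X` is strictly log-concave and symmetric about `μ < 0`, and `-x`
is closer to `μ` than `x`. The second factor has the sign of `f_ε(x) / f_ε̃(x) - I / Ĩ`. Since
`f_X * (f_ε - (I / Ĩ) f_ε̃)` integrates to zero without vanishing identically, the even function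
`f_ε - (I / Ĩ) f_ε̃` takes both signs on `(0, ∞)`, so the strictly decreasing ratio crosses the
level `I / Ĩ` at exactly one point `c > 0`.
-/

theorem IsDensity.pos {f : ℝ → ℝ} (hf : IsDensity f) (x : ℝ) : 0 < f x := hf.1 x

theorem IsDensity.continuous {f : ℝ → ℝ} (hf : IsDensity f) : Continuous f := hf.2.1.continuous

theorem IsDensity.integrable {f : ℝ → ℝ} (hf : IsDensity f) : Integrable f :=
  Integrable.of_integral_ne_zero (hf.2.2.1 ▸ one_ne_zero)

theorem SymmAbout.apply_neg {f : ℝ → ℝ} (hf : SymmAbout 0 f) (x : ℝ) : f (-x) = f x := by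
  simpa using (hf x).symm

theorem SymmAbout.lt_of_abs_sub_lt_of_strictConcaveOn {g : ℝ → ℝ} {μ a b : ℝ}
    (hsym : SymmAbout μ g) (hg : StrictConcaveOn ℝ univ g) (hab : |a - μ| < |b - μ|) :
    g b < g a := by
  set t := |b - μ|
  have hb : g b = g (μ + t) := by
    rcases abs_choice (b - μ) with h | h
    · rw [show t = b - μ from h, add_sub_cancel]
    · rw [show t = -(b - μ) from h, hsym, sub_neg_eq_add, add_sub_cancel]
  have ha : a ∈ openSegment ℝ (μ - t) (μ + t) := by
    rw [openSegment_eq_Ioo (by linarith [(abs_nonneg (a - μ)).trans_lt hab])]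
    obtain ⟨h₁, h₂⟩ := abs_sub_lt_iff.1 hab
    exact ⟨by linarith, by linarith⟩
  calc g b = min (g (μ - t)) (g (μ + t)) := by rw [← hsym, min_self, hb]
    _ < g a := hg.lt_on_openSegment trivial trivial (by linarith [abs_nonneg (a - μ)]) ha

theorem SymmAbout.lt_of_abs_sub_lt_of_strictConcaveOn_log {f : ℝ → ℝ} {μ a b : ℝ}
    (hsym : SymmAbout μ f) (hpos : ∀ x, 0 < f x)
    (hf : StrictConcaveOn ℝ univ fun x => log (f x)) (hab : |a - μ| < |b - μ|) : f b < f a :=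
  (log_lt_log_iff (hpos b) (hpos a)).1 <|
    SymmAbout.lt_of_abs_sub_lt_of_strictConcaveOn (g := fun x => log (f x))
      (fun x => congrArg log (hsym x)) hf hab

theorem SymmAbout.le_center_of_strictConcaveOn_log {f : ℝ → ℝ} {μ : ℝ} (hsym : SymmAbout μ f)
    (hpos : ∀ x, 0 < f x) (hf : StrictConcaveOn ℝ univ fun x => log (f x)) (x : ℝ) :
    f x ≤ f μ := by
  rcases eq_or_ne x μ with rfl | hx
  · exact le_rfl
  · refine (hsym.lt_of_abs_sub_lt_of_strictConcaveOn_log hpos hf ?_).le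
    rwa [sub_self, abs_zero, abs_pos, sub_ne_zero]

theorem SymmAbout.apply_lt_apply_neg_of_strictConcaveOn_log {f : ℝ → ℝ} {μ x : ℝ}
    (hsym : SymmAbout μ f) (hpos : ∀ x, 0 < f x) (hf : StrictConcaveOn ℝ univ fun x => log (f x))
    (hμ : μ < 0) (hx : 0 < x) : f x < f (-x) := by
  refine hsym.lt_of_abs_sub_lt_of_strictConcaveOn_log hpos hf ?_
  rw [abs_of_pos (by linarith : 0 < x - μ), abs_lt]
  constructor <;> linarith

theorem exists_pos_apply_pos_of_integral_mul_eq_zero {w φ : ℝ → ℝ} (hw : ∀ x, 0 < w x)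
    (hwc : Continuous w) (hφc : Continuous φ) (hφ : SymmAbout 0 φ)
    (hint : Integrable fun x => w x * φ x) (h0 : ∫ x, w x * φ x = 0) {x₀ : ℝ} (hx₀ : φ x₀ ≠ 0) :
    ∃ x, 0 < x ∧ 0 < φ x := by
  by_contra! hle
  have hoff : {0}ᶜ ⊆ {x | φ x ≤ 0} := fun x hx => by
    rcases lt_or_gt_of_ne hx with h | h
    · show φ x ≤ 0
      rw [← hφ.apply_neg]
      exact hle _ (neg_pos.2 h)
    · exact hle x h
  have hnonpos : ∀ x, φ x ≤ 0 := by
    have hcl := closure_minimal hoff (isClosed_le hφc continuous_const)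
    rw [(dense_compl_singleton (0 : ℝ)).closure_eq] at hcl
    exact fun x => hcl (mem_univ x)
  have hpos : 0 < ∫ x, -(w x * φ x) :=
    integral_pos_of_integrable_nonneg_nonzero (x := x₀) (by fun_prop) hint.neg
      (fun x => neg_nonneg.2 (mul_nonpos_of_nonneg_of_nonpos (hw x).le (hnonpos x)))
      (neg_ne_zero.2 (mul_ne_zero (hw x₀).ne' hx₀))
  rw [integral_neg, h0, neg_zero] at hpos
  exact lt_irrefl 0 hpos

theorem exists_pos_apply_neg_of_integral_mul_eq_zero {w φ : ℝ → ℝ} (hw : ∀ x, 0 < w x)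
    (hwc : Continuous w) (hφc : Continuous φ) (hφ : SymmAbout 0 φ)
    (hint : Integrable fun x => w x * φ x) (h0 : ∫ x, w x * φ x = 0) {x₀ : ℝ} (hx₀ : φ x₀ ≠ 0) :
    ∃ x, 0 < x ∧ φ x < 0 := by
  obtain ⟨x, hx, hφx⟩ := exists_pos_apply_pos_of_integral_mul_eq_zero (φ := fun x => -φ x) hw hwc
    hφc.neg (fun x => congrArg Neg.neg (hφ x)) (by simpa only [mul_neg] using hint.fun_neg)
    (by simp only [mul_neg, integral_neg, h0, neg_zero]) (neg_ne_zero.2 hx₀)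
  exact ⟨x, hx, neg_pos.1 hφx⟩

theorem exists_pos_div_eq_integral_mul_div_integral_mul {w g h : ℝ → ℝ} (hw : ∀ x, 0 < w x)
    (hh : ∀ x, 0 < h x) (hwc : Continuous w) (hgc : Continuous g) (hhc : Continuous h)
    (hgs : SymmAbout 0 g) (hhs : SymmAbout 0 h) (hgi : Integrable fun x => w x * g x)
    (hhi : Integrable fun x => w x * h x) (hanti : StrictAntiOn (fun x => g x / h x) (Ioi 0)) :
    ∃ c, 0 < c ∧ g c / h c = (∫ x, w x * g x) / ∫ x, w x * h x := by
  set k := (∫ x, w x * g x) / ∫ x, w x * h x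
  have hI : 0 < ∫ x, w x * h x :=
    integral_pos_of_integrable_nonneg_nonzero (x := 0) (by fun_prop) hhi
      (fun x => (mul_pos (hw x) (hh x)).le) (mul_pos (hw 0) (hh 0)).ne'
  set φ := fun x => g x - k * h x
  have hφc : Continuous φ := by fun_prop
  have hφs : SymmAbout 0 φ := fun x => by simp only [φ, hgs x, hhs x]
  have hφi : Integrable fun x => w x * φ x := by
    refine (hgi.sub (hhi.const_mul k)).congr (.of_forall fun x => ?_)
    simp only [φ, Pi.sub_apply]
    ring
  have hφ0 : ∫ x, w x * φ x = 0 := by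
    simp only [φ, mul_sub, mul_left_comm (w _) k]
    rw [integral_sub hgi (hhi.const_mul k), integral_const_mul, div_mul_cancel₀ _ hI.ne', sub_self]
  obtain ⟨x₀, hx₀⟩ : ∃ x₀, φ x₀ ≠ 0 := by
    by_contra! hzero
    have hratio : ∀ x, g x / h x = k := fun x => by
      rw [div_eq_iff (hh x).ne', ← sub_eq_zero]
      exact hzero x
    exact (hanti (mem_Ioi.2 one_pos) (mem_Ioi.2 two_pos) one_lt_two).ne (by simp only [hratio])
  obtain ⟨a, ha, hφa⟩ := exists_pos_apply_pos_of_integral_mul_eq_zero hw hwc hφc hφs hφi hφ0 hx₀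
  obtain ⟨b, hb, hφb⟩ := exists_pos_apply_neg_of_integral_mul_eq_zero hw hwc hφc hφs hφi hφ0 hx₀
  have hka : k < g a / h a := by rwa [lt_div_iff₀ (hh a), ← sub_pos]
  have hkb : g b / h b < k := by rwa [div_lt_iff₀ (hh b), ← sub_neg]
  have hcont : ContinuousOn (fun x => g x / h x) (uIcc a b) :=
    (hgc.div hhc fun x => (hh x).ne').continuousOn
  obtain ⟨c, hc, hck⟩ := intermediate_value_uIcc hcont (mem_uIcc.2 (Or.inr ⟨hkb.le, hka.le⟩))
  exact ⟨c, (lt_min ha hb).trans_le hc.1, hck⟩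

theorem postDensity0_asymmetry_sub {fX fε fε' : ℝ → ℝ} (hε : SymmAbout 0 fε)
    (hε' : SymmAbout 0 fε') {x : ℝ} (hx : fε' x ≠ 0) (hI : ∫ u, fX u * fε u ≠ 0) :
    (postDensity0 fX fε (-x) - postDensity0 fX fε x) -
        (postDensity0 fX fε' (-x) - postDensity0 fX fε' x) =
      (fX (-x) - fX x) * (fε' x / ∫ u, fX u * fε u) *
        (fε x / fε' x - (∫ u, fX u * fε u) / ∫ u, fX u * fε' u) := by
  simp only [postDensity0, hε.apply_neg, hε'.apply_neg]
  field_simp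

theorem single_crossing_posterior_asymmetries_general
    (fX fε fε' : ℝ → ℝ) (μ : ℝ) (hμneg : μ < 0)
    (hfX : IsDensity fX) (hfXsym : SymmAbout μ fX)
    (hfXsc : StrictConcaveOn ℝ Set.univ fun x => Real.log (fX x))
    (hfε : IsDensity fε) (hfεsym : SymmAbout 0 fε)
    (hfε' : IsDensity fε') (hfε'sym : SymmAbout 0 fε')
    (hratio : StrictAntiOn (fun x => fε x / fε' x) (Set.Ioi 0)) :
    ∃ c : ℝ, 0 < c ∧
      (∀ x ∈ Set.Ioo 0 c,
        0 < (postDensity0 fX fε (-x) - postDensity0 fX fε x) -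
            (postDensity0 fX fε' (-x) - postDensity0 fX fε' x)) ∧
      (∀ x, c < x →
        (postDensity0 fX fε (-x) - postDensity0 fX fε x) -
            (postDensity0 fX fε' (-x) - postDensity0 fX fε' x) < 0) := by
  have hprior_int : ∀ {f : ℝ → ℝ}, IsDensity f → Integrable fun x => fX x * f x := fun hf =>
    hf.integrable.bdd_mul hfX.continuous.aestronglyMeasurable (c := fX μ) (.of_forall fun x => by
      rw [norm_of_nonneg (hfX.pos x).le]
      exact hfXsym.le_center_of_strictConcaveOn_log hfX.pos hfXsc x)
  have hI : 0 < ∫ u, fX u * fε u :=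
    integral_pos_of_integrable_nonneg_nonzero (x := 0) (hfX.continuous.mul hfε.continuous)
      (hprior_int hfε) (fun x => (mul_pos (hfX.pos x) (hfε.pos x)).le)
      (mul_pos (hfX.pos 0) (hfε.pos 0)).ne'
  obtain ⟨c, hc, hck⟩ := exists_pos_div_eq_integral_mul_div_integral_mul hfX.pos hfε'.pos
    hfX.continuous hfε.continuous hfε'.continuous hfεsym hfε'sym (hprior_int hfε)
    (hprior_int hfε') hratio
  have hfactor : ∀ x, 0 < x → 0 < (fX (-x) - fX x) * (fε' x / ∫ u, fX u * fε u) := fun x hx =>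
    mul_pos (sub_pos.2 (hfXsym.apply_lt_apply_neg_of_strictConcaveOn_log hfX.pos hfXsc hμneg hx))
      (div_pos (hfε'.pos x) hI)
  refine ⟨c, hc, fun x hx => ?_, fun x hx => ?_⟩
  · rw [postDensity0_asymmetry_sub hfεsym hfε'sym (hfε'.pos x).ne' hI.ne']
    exact mul_pos (hfactor x hx.1) (sub_pos.2 (hck ▸ hratio hx.1 hc hx.2))
  · rw [postDensity0_asymmetry_sub hfεsym hfε'sym (hfε'.pos x).ne' hI.ne']
    exact mul_neg_of_pos_of_neg (hfactor x (hc.trans hx))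
      (sub_neg.2 (hck ▸ hratio hc (hc.trans hx) hx))

/-- Lemma 2: single-crossing of posterior asymmetries. -/
theorem single_crossing_posterior_asymmetries
    (fX fε fε' : ℝ → ℝ) (μ : ℝ) (hμneg : μ < 0)
    (hfX : IsDensity fX) (hfXsym : SymmAbout μ fX) (hμ : μ = ∫ x, x * fX x)
    (hfXsc : StrictConcaveOn ℝ Set.univ fun x => Real.log (fX x))
    (hfε : IsDensity fε) (hfεsym : SymmAbout 0 fε) (hfεqc : QuasiConcaveFn fε)
    (hfε' : IsDensity fε') (hfε'sym : SymmAbout 0 fε') (hfε'qc : QuasiConcaveFn fε')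
    (hratio : StrictAntiOn (fun x => fε x / fε' x) (Set.Ioi 0)) :
    ∃ c : ℝ, 0 < c ∧
      (∀ x ∈ Set.Ioo 0 c,
        0 < (postDensity0 fX fε (-x) - postDensity0 fX fε x) -
            (postDensity0 fX fε' (-x) - postDensity0 fX fε' x)) ∧
      (∀ x, c < x →
        (postDensity0 fX fε (-x) - postDensity0 fX fε x) -
            (postDensity0 fX fε' (-x) - postDensity0 fX fε' x) < 0) :=
  single_crossing_posterior_asymmetries_general fX fε fε' μ hμneg hfX hfXsym hfXsc hfε hfεsym hfε'
    hfε'sym hratio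
end
end

section
/- Monotone posterior reflection ratio (Lemma 3). Let f_X be a density symmetric about its mean μ < 0 with log f_X strictly concave, and let f_ε̃ be a density symmetric about 0. Define the posterior density at signal realization 0 by p(x) := f_X(x)·f_ε̃(x) / ∫ f_X(u)·f_ε̃(u) du. Then the map x ↦ p(−x)/p(x) is strictly increasing on ℝ. -/
open MeasureTheory Real Set

noncomputable section

/-!
The normalising constant cancels from the ratio, and so does the noise density, being even;
the constant is positive because the product is integrable, `fX` being bounded by `fX μ` (a
symmetric log-concave function peaks at its centre). What remains is
`fX (-x) / fX x = fX (x + 2μ) / fX x = exp (g (x + 2μ) - g x)` with `g = log fX`, and for a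
strictly concave `g` the increment over a fixed negative shift `2μ` is strictly increasing.
-/

theorem StrictConcaveOn.strictMono_comp_add_sub {𝕜 : Type*} [Field 𝕜] [LinearOrder 𝕜]
    [IsStrictOrderedRing 𝕜] {f : 𝕜 → 𝕜} (hf : StrictConcaveOn 𝕜 univ f) {c : 𝕜} (hc : c < 0) :
    StrictMono fun x => f (x + c) - f x := by
  -- slope on `[y + c, y]` < slope on `[x + c, y]` < slope on `[x + c, x]`
  intro x y hxy
  have h₁ := hf.secant_strict_mono (mem_univ (x + c)) (mem_univ x) (mem_univ y)
    (by linarith) (by linarith) hxy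
  have h₂ := hf.secant_strict_mono (mem_univ y) (mem_univ (x + c)) (mem_univ (y + c))
    (by linarith) (by linarith) (by linarith)
  rw [add_sub_cancel_left] at h₂
  have e₁ : (f (x + c) - f y) / (x + c - y) = (f y - f (x + c)) / (y - (x + c)) := by
    rw [← neg_div_neg_eq, neg_sub, neg_sub]
  have e₂ : (f x - f (x + c)) / (x - (x + c)) = (f (x + c) - f x) / c := by
    rw [← neg_div_neg_eq, neg_sub, neg_sub, add_sub_cancel_left]
  have := (div_lt_div_right_of_neg hc).1 ((h₂.trans_eq e₁).trans (h₁.trans_eq e₂))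
  simp only
  linarith

theorem SymmAbout.apply_two_mul_sub {m : ℝ} {f : ℝ → ℝ} (h : SymmAbout m f) (x : ℝ) :
    f (2 * m - x) = f x := by
  simpa only [show m + (x - m) = x by ring, show m - (x - m) = 2 * m - x by ring]
    using (h (x - m)).symm

theorem ConcaveOn.le_of_symmAbout {m : ℝ} {f : ℝ → ℝ} (hf : ConcaveOn ℝ univ f)
    (hsym : SymmAbout m f) (x : ℝ) : f x ≤ f m := by
  have := hf.2 (mem_univ x) (mem_univ (2 * m - x)) (by norm_num : (0 : ℝ) ≤ 1 / 2)
    (by norm_num : (0 : ℝ) ≤ 1 / 2) (by norm_num)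
  simp only [hsym.apply_two_mul_sub, smul_eq_mul] at this
  rw [show 1 / 2 * x + 1 / 2 * (2 * m - x) = m by ring] at this
  linarith

theorem IsDensity.le_of_symmAbout_of_logConcave {m : ℝ} {f : ℝ → ℝ} (hf : IsDensity f)
    (hsym : SymmAbout m f) (hlog : ConcaveOn ℝ univ fun x => log (f x)) (x : ℝ) : f x ≤ f m :=
  (log_le_log_iff (hf.1 x) (hf.1 m)).1 <| hlog.le_of_symmAbout (fun t => congrArg log (hsym t)) x

theorem integral_mul_pos_of_isDensity {f g : ℝ → ℝ} {C : ℝ} (hf : IsDensity f)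
    (hg : IsDensity g) (hC : ∀ x, f x ≤ C) : 0 < ∫ x, f x * g x := by
  have hint : Integrable fun x => f x * g x :=
    hg.integrable.bdd_mul hf.integrable.aestronglyMeasurable
      (.of_forall fun x => by rw [norm_of_nonneg (hf.1 x).le]; exact hC x)
  rw [integral_pos_iff_support_of_nonneg (fun x => (mul_pos (hf.1 x) (hg.1 x)).le) hint,
    Function.support_eq_univ fun x => (mul_pos (hf.1 x) (hg.1 x)).ne']
  simp

theorem postDensity0_neg_div {fX fn : ℝ → ℝ} (hn : SymmAbout 0 fn) (hpos : ∀ x, fn x ≠ 0)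
    (hZ : ∫ u, fX u * fn u ≠ 0) (x : ℝ) :
    postDensity0 fX fn (-x) / postDensity0 fX fn x = fX (-x) / fX x := by
  have : fn (-x) = fn x := by simpa using hn.apply_two_mul_sub x
  unfold postDensity0
  rw [this]
  field_simp [hpos x]

theorem strictMono_div_comp_add {f : ℝ → ℝ} (hpos : ∀ x, 0 < f x)
    (hf : StrictConcaveOn ℝ univ fun x => log (f x)) {c : ℝ} (hc : c < 0) :
    StrictMono fun x => f (x + c) / f x := by
  have : (fun x => f (x + c) / f x) = fun x => exp (log (f (x + c)) - log (f x)) := by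
    ext x; rw [exp_sub, exp_log (hpos _), exp_log (hpos _)]
  rw [this]
  exact exp_strictMono.comp (hf.strictMono_comp_add_sub hc)

theorem posterior_reflection_ratio_strictMono_general
    (fX fε' : ℝ → ℝ) (μ : ℝ) (hμneg : μ < 0)
    (hfX : IsDensity fX) (hfXsym : SymmAbout μ fX)
    (hfXsc : StrictConcaveOn ℝ Set.univ fun x => Real.log (fX x))
    (hfε' : IsDensity fε') (hfε'sym : SymmAbout 0 fε') :
    StrictMono (fun x => postDensity0 fX fε' (-x) / postDensity0 fX fε' x) := by
  have hZ : 0 < ∫ u, fX u * fε' u := integral_mul_pos_of_isDensity hfX hfε'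
    (hfX.le_of_symmAbout_of_logConcave hfXsym hfXsc.concaveOn)
  have hratio : (fun x => postDensity0 fX fε' (-x) / postDensity0 fX fε' x) =
      fun x => fX (x + 2 * μ) / fX x := by
    ext x
    rw [postDensity0_neg_div hfε'sym (fun x => (hfε'.1 x).ne') hZ.ne', ← hfXsym.apply_two_mul_sub,
      show 2 * μ - -x = x + 2 * μ by ring]
  rw [hratio]
  exact strictMono_div_comp_add hfX.1 hfXsc (by linarith)

/-- Lemma 3: the posterior reflection ratio is strictly increasing. -/
theorem posterior_reflection_ratio_strictMono
    (fX fε' : ℝ → ℝ) (μ : ℝ) (hμneg : μ < 0)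
    (hfX : IsDensity fX) (hfXsym : SymmAbout μ fX) (hμ : μ = ∫ x, x * fX x)
    (hfXsc : StrictConcaveOn ℝ Set.univ fun x => Real.log (fX x))
    (hfε' : IsDensity fε') (hfε'sym : SymmAbout 0 fε') :
    StrictMono (fun x => postDensity0 fX fε' (-x) / postDensity0 fX fε' x) :=
  posterior_reflection_ratio_strictMono_general fX fε' μ hμneg hfX hfXsym hfXsc hfε' hfε'sym
end
end

section
/- Tail-mass ratio inequality (Lemma 4). Let p : ℝ → (0,∞) be integrable with ∫ p = 1, and suppose x ↦ p(−x)/p(x) is nondecreasing on (0,∞). Define F₁ := ∫_1^∞ p(−x) dx, F₂ := ∫_0^1 p(−x) dx, F₃ := ∫_0^1 p(x) dx, F₄ := ∫_1^∞ p(x) dx. Then F₁/F₄ ≥ F₂/F₃ (equivalently F₁·F₃ ≥ F₂·F₄). -/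
open MeasureTheory Real Set

/-! Set `c := p(-1)/p(1)`. By monotonicity the ratio `p(-x)/p(x)` is at most `c` on `(0, 1)` and at
least `c` on `(1, ∞)`; integrating `p(-x) ≤ c p(x)` resp. `c p(x) ≤ p(-x)` over these sets gives
`F₂/F₃ ≤ c ≤ F₁/F₄`. -/

section RatioBounds

variable {α : Type*} [MeasurableSpace α] {μ : Measure α} {f g : α → ℝ} {s : Set α} {c : ℝ}

theorem setIntegral_pos_of_forall_pos (hs : MeasurableSet s) (hμs : μ s ≠ 0)
    (hg : IntegrableOn g s μ) (hg_pos : ∀ x ∈ s, 0 < g x) : 0 < ∫ x in s, g x ∂μ := by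
  have h_supp : Function.support g ∩ s = s :=
    inter_eq_right.mpr fun x hx => (hg_pos x hx).ne'
  rw [setIntegral_pos_iff_support_of_nonneg_ae
      ((ae_restrict_iff' hs).mpr (.of_forall fun x hx => (hg_pos x hx).le)) hg, h_supp]
  exact pos_iff_ne_zero.mpr hμs

theorem setIntegral_div_setIntegral_le_of_forall_div_le (hs : MeasurableSet s) (hμs : μ s ≠ 0)
    (hf : IntegrableOn f s μ) (hg : IntegrableOn g s μ) (hg_pos : ∀ x ∈ s, 0 < g x)
    (hfg : ∀ x ∈ s, f x / g x ≤ c) :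
    (∫ x in s, f x ∂μ) / (∫ x in s, g x ∂μ) ≤ c := by
  rw [div_le_iff₀ (setIntegral_pos_of_forall_pos hs hμs hg hg_pos), ← integral_const_mul]
  exact setIntegral_mono_on hf (hg.const_mul c) hs fun x hx =>
    (div_le_iff₀ (hg_pos x hx)).mp (hfg x hx)

theorem le_setIntegral_div_setIntegral_of_forall_le_div (hs : MeasurableSet s) (hμs : μ s ≠ 0)
    (hf : IntegrableOn f s μ) (hg : IntegrableOn g s μ) (hg_pos : ∀ x ∈ s, 0 < g x)
    (hfg : ∀ x ∈ s, c ≤ f x / g x) :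
    c ≤ (∫ x in s, f x ∂μ) / (∫ x in s, g x ∂μ) := by
  rw [le_div_iff₀ (setIntegral_pos_of_forall_pos hs hμs hg hg_pos), ← integral_const_mul]
  exact setIntegral_mono_on (hg.const_mul c) hf hs fun x hx =>
    (le_div_iff₀ (hg_pos x hx)).mp (hfg x hx)

end RatioBounds

theorem tail_mass_ratio_inequality_general
    (p : ℝ → ℝ) (hpos : ∀ x, 0 < p x)
    (hint : MeasureTheory.Integrable p)
    (hmono : MonotoneOn (fun x => p (-x) / p x) (Set.Ioi 0)) :
    (∫ x in Set.Ioo (0:ℝ) 1, p (-x)) / (∫ x in Set.Ioo (0:ℝ) 1, p x) ≤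
      (∫ x in Set.Ioi (1:ℝ), p (-x)) / (∫ x in Set.Ioi (1:ℝ), p x) := by
  have hint_neg : Integrable (fun x => p (-x)) := hint.comp_neg
  have h_one : (1 : ℝ) ∈ Ioi 0 := mem_Ioi.mpr zero_lt_one
  calc (∫ x in Ioo (0:ℝ) 1, p (-x)) / (∫ x in Ioo (0:ℝ) 1, p x)
      ≤ p (-1) / p 1 :=
        setIntegral_div_setIntegral_le_of_forall_div_le measurableSet_Ioo (by simp)
          hint_neg.integrableOn hint.integrableOn (fun x _ => hpos x)
          fun _ hx => hmono hx.1 h_one hx.2.le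
    _ ≤ (∫ x in Ioi (1:ℝ), p (-x)) / (∫ x in Ioi (1:ℝ), p x) :=
        le_setIntegral_div_setIntegral_of_forall_le_div measurableSet_Ioi (by simp)
          hint_neg.integrableOn hint.integrableOn (fun x _ => hpos x)
          fun _ hx => hmono h_one (mem_Ioi.mpr (zero_lt_one.trans hx)) hx.le

/-- Lemma 4: tail-mass ratio inequality. -/
theorem tail_mass_ratio_inequality
    (p : ℝ → ℝ) (hpos : ∀ x, 0 < p x)
    (hint : MeasureTheory.Integrable p) (hone : (∫ x, p x) = 1)
    (hmono : MonotoneOn (fun x => p (-x) / p x) (Set.Ioi 0)) :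
    (∫ x in Set.Ioo (0:ℝ) 1, p (-x)) / (∫ x in Set.Ioo (0:ℝ) 1, p x) ≤
      (∫ x in Set.Ioi (1:ℝ), p (-x)) / (∫ x in Set.Ioi (1:ℝ), p x) :=
  tail_mass_ratio_inequality_general p hpos hint hmono
end

section
/- Algebraic rebalancing inequality (Lemma 6). Let F₁, F₂, F₃, F₄ > 0 satisfy F₁ + F₂ + F₃ + F₄ = 1 and F₁/F₄ > F₂/F₃. Let k > 1 and define l ∈ ℝ by l·(F₁ + F₄) = (F₁ + F₄) − (k − 1)·(F₂ + F₃). Then −k·F₂ + k·F₃ − l·F₁ + l·F₄ > −F₂ + F₃ − F₁ + F₄. -/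
/-! The gain of the right-hand side over the left is `(k - 1) (F₃ - F₂) + (1 - l) (F₁ - F₄)`.
The definition of `l` says `(1 - l) (F₁ + F₄) = (k - 1) (F₂ + F₃)`, so multiplying the gain by
`F₁ + F₄` turns it into `2 (k - 1) (F₁ F₃ - F₂ F₄)`, which is positive exactly by the ratio
hypothesis `F₂ / F₃ < F₁ / F₄`. -/

lemma rebalancing_gain_mul_eq {F₁ F₂ F₃ F₄ k l : ℝ}
    (hl : l * (F₁ + F₄) = (F₁ + F₄) - (k - 1) * (F₂ + F₃)) :
    ((k - 1) * (F₃ - F₂) + (1 - l) * (F₁ - F₄)) * (F₁ + F₄) =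
      2 * (k - 1) * (F₁ * F₃ - F₂ * F₄) := by
  linear_combination (F₄ - F₁) * hl

lemma rebalancing_gain_pos {F₁ F₂ F₃ F₄ k l : ℝ} (h₁₄ : 0 < F₁ + F₄)
    (hcross : F₂ * F₄ < F₁ * F₃) (hk : 1 < k)
    (hl : l * (F₁ + F₄) = (F₁ + F₄) - (k - 1) * (F₂ + F₃)) :
    0 < (k - 1) * (F₃ - F₂) + (1 - l) * (F₁ - F₄) := by
  refine pos_of_mul_pos_left ?_ h₁₄.le
  rw [rebalancing_gain_mul_eq hl]
  exact mul_pos (mul_pos two_pos (sub_pos.2 hk)) (sub_pos.2 hcross)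

theorem algebraic_rebalancing_general
    (F₁ F₂ F₃ F₄ k l : ℝ)
    (h₁ : 0 < F₁) (h₃ : 0 < F₃) (h₄ : 0 < F₄)
    (hratio : F₂ / F₃ < F₁ / F₄)
    (hk : 1 < k)
    (hl : l * (F₁ + F₄) = (F₁ + F₄) - (k - 1) * (F₂ + F₃)) :
    -F₂ + F₃ - F₁ + F₄ < -(k * F₂) + k * F₃ - l * F₁ + l * F₄ := by
  have hcross : F₂ * F₄ < F₁ * F₃ := (div_lt_div_iff₀ h₃ h₄).1 hratio
  have hgain := rebalancing_gain_pos (add_pos h₁ h₄) hcross hk hl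
  linarith

/-- Lemma 6: algebraic rebalancing inequality. -/
theorem algebraic_rebalancing
    (F₁ F₂ F₃ F₄ k l : ℝ)
    (h₁ : 0 < F₁) (h₂ : 0 < F₂) (h₃ : 0 < F₃) (h₄ : 0 < F₄)
    (hsum : F₁ + F₂ + F₃ + F₄ = 1)
    (hratio : F₂ / F₃ < F₁ / F₄)
    (hk : 1 < k)
    (hl : l * (F₁ + F₄) = (F₁ + F₄) - (k - 1) * (F₂ + F₃)) :
    -F₂ + F₃ - F₁ + F₄ < -(k * F₂) + k * F₃ - l * F₁ + l * F₄ :=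
  algebraic_rebalancing_general F₁ F₂ F₃ F₄ k l h₁ h₃ h₄ hratio hk hl
end

section
/- The Student-t family satisfies the scaling criterion. For every ν > 0, the function x ↦ −((ν + 1)/2)·log(1 + exp(2x)/ν) is concave on ℝ. Equivalently, for the Student-t density f(x) = c_ν·(1 + x²/ν)^{−(ν+1)/2} (c_ν > 0 a normalizing constant), the map x ↦ log f(exp x) is concave on ℝ, even though f itself is not log-concave. -/
/-!
Writing `exp (2 * x) / ν = exp (2 * x - log ν)`, the function `log (1 + exp (2 * x) / ν)` is the
softplus function `y ↦ log (1 + exp y)` composed with an affine map, and softplus is convex because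
its derivative, the logistic function `1 - (1 + exp y)⁻¹`, is monotone. Multiplying by
`-((ν + 1) / 2) ≤ 0` gives concavity, and `log f (exp x)` differs from this only by the constant
`log c`.
-/

open Real Set

theorem convexOn_log_one_add_exp : ConvexOn ℝ univ fun x : ℝ => log (1 + exp x) := by
  have hderiv (x : ℝ) : HasDerivAt (fun x => log (1 + exp x)) (1 - (1 + exp x)⁻¹) x := by
    convert ((hasDerivAt_exp x).const_add 1).log (by positivity) using 1
    field_simp
    ring
  refine Monotone.convexOn_univ_of_deriv (fun x => (hderiv x).differentiableAt) ?_
  rw [show deriv _ = _ from funext fun x => (hderiv x).deriv]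
  intro x y hxy
  dsimp only
  gcongr

theorem convexOn_log_one_add_exp_mul_div {ν : ℝ} (hν : 0 < ν) (a : ℝ) :
    ConvexOn ℝ univ fun x : ℝ => log (1 + exp (a * x) / ν) := by
  let g : ℝ →ᵃ[ℝ] ℝ := a • AffineMap.id ℝ ℝ - AffineMap.const ℝ ℝ (log ν)
  have hg : (fun x : ℝ => log (1 + exp (a * x) / ν)) = (fun x => log (1 + exp x)) ∘ g := by
    ext x
    simp [g, exp_sub, exp_log hν]
  rw [hg, ← preimage_univ (f := g)]
  exact convexOn_log_one_add_exp.comp_affineMap g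

/-- The Student-t family satisfies the scaling criterion: `x ↦ log f(exp x)` is
concave for the Student-t density with parameter `ν > 0`. -/
theorem studentT_scaling_criterion (ν : ℝ) (hν : 0 < ν) :
    ConcaveOn ℝ Set.univ
      (fun x : ℝ => -((ν + 1) / 2) * Real.log (1 + Real.exp (2 * x) / ν)) ∧
    ∀ c : ℝ, 0 < c →
      ConcaveOn ℝ Set.univ
        (fun x : ℝ => Real.log (c * (1 + (Real.exp x) ^ 2 / ν) ^ (-((ν + 1) / 2)))) := by
  have hconcave : ConcaveOn ℝ univ fun x : ℝ => -((ν + 1) / 2) * log (1 + exp (2 * x) / ν) := by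
    have hk : 0 ≤ (ν + 1) / 2 := by positivity
    simpa only [Pi.neg_def, smul_eq_mul, neg_mul] using ((convexOn_log_one_add_exp_mul_div hν 2).smul hk).neg
  refine ⟨hconcave, fun c hc => ?_⟩
  have hlog : (fun x : ℝ => log (c * (1 + exp x ^ 2 / ν) ^ (-((ν + 1) / 2)))) =
      fun x => -((ν + 1) / 2) * log (1 + exp (2 * x) / ν) + log c := by
    ext x
    have hbase : 0 < 1 + exp x ^ 2 / ν := by positivity
    rw [log_mul hc.ne' (rpow_pos_of_pos hbase _).ne', log_rpow hbase, ← exp_nat_mul]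
    push_cast
    ring
  rw [hlog]
  exact hconcave.add_const _
end

section
/- Less precise implies mean-preserving spread (footnote claim). Let f and g be quasi-concave densities symmetric about 0 (hence both have mean 0), and suppose g is less precise than f. Let F(t) := ∫_{−∞}^t f(u) du and G(t) := ∫_{−∞}^t g(u) du be their cumulative distribution functions. Then for every t ∈ ℝ, ∫_{−∞}^t (G(u) − F(u)) du ≥ 0; that is, g dominates f in the convex order (g is a mean-preserving spread of f). -/
open MeasureTheory Real Set

noncomputable section

/-!
By symmetry each distribution function satisfies `F (-u) = 1 - F u`, so `G - F` is odd and,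
for `t > 0`, `∫_{-∞}^t (G - F) = ∫_{-∞}^{-t} (G - F)`. It therefore suffices that `F ≤ G` on
`(-∞, 0]`, i.e. that every tail `(a, ∞)`, `a ≥ 0`, has at least as much `g`-mass as `f`-mass.
Both densities put mass `1/2` on `(0, ∞)`, and since `g / f` is nondecreasing there, `g - f`
changes sign at most once, from `-` to `+`: either `g ≥ f` on all of `(a, ∞)`, or `g ≤ f` on
`(0, a]`, and then the tail of `g` makes up for its deficit on `(0, a]`.
-/

theorem SymmAbout.even {f : ℝ → ℝ} (h : SymmAbout 0 f) : Function.Even f := fun x => by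
  simpa using (h x).symm

theorem IsDensity.integral_Iic_add_integral_Ioi {f : ℝ → ℝ} (hf : IsDensity f) (u : ℝ) :
    (∫ v in Iic u, f v) + ∫ v in Ioi u, f v = 1 := by
  rw [intervalIntegral.integral_Iic_add_Ioi hf.integrable.integrableOn
    hf.integrable.integrableOn, hf.2.2.1]

theorem Function.Even.integral_Iic_eq_integral_Ioi_neg {E : Type*} [NormedAddCommGroup E]
    [NormedSpace ℝ E] {f : ℝ → E} (hf : Function.Even f) (u : ℝ) :
    ∫ v in Iic u, f v = ∫ v in Ioi (-u), f v := by
  rw [← integral_comp_neg_Iic]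
  exact setIntegral_congr_fun measurableSet_Iic fun v _ => (hf v).symm

theorem IsDensity.integral_Ioi_zero_of_even {f : ℝ → ℝ} (hf : IsDensity f)
    (heven : Function.Even f) : ∫ v in Ioi 0, f v = 1 / 2 := by
  have hsplit := hf.integral_Iic_add_integral_Ioi 0
  rw [heven.integral_Iic_eq_integral_Ioi_neg, neg_zero] at hsplit
  linarith

theorem Function.Odd.intervalIntegral_neg_eq_zero {φ : ℝ → ℝ} (hφ : Function.Odd φ) (t : ℝ) :
    ∫ u in -t..t, φ u = 0 := by
  have h := intervalIntegral.integral_comp_neg (a := -t) (b := t) φ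
  rw [neg_neg, intervalIntegral.integral_congr (g := fun u => -φ u) fun u _ => hφ u,
    intervalIntegral.integral_neg] at h
  linarith

theorem Function.Odd.setIntegral_Iic_nonneg {φ : ℝ → ℝ} (hφ : Function.Odd φ)
    (hnonneg : ∀ u ≤ 0, 0 ≤ φ u) (t : ℝ) : 0 ≤ ∫ u in Iic t, φ u := by
  have hleft : ∀ s ≤ 0, 0 ≤ ∫ u in Iic s, φ u := fun s hs =>
    setIntegral_nonneg measurableSet_Iic fun u hu => hnonneg u (le_trans hu hs)
  rcases le_or_gt t 0 with ht | ht
  · exact hleft t ht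
  by_cases hint : IntegrableOn φ (Iic t)
  · have hsplit := intervalIntegral.integral_Iic_sub_Iic
      (hint.mono_set (Iic_subset_Iic.2 (by linarith : -t ≤ t))) hint
    rw [hφ.intervalIntegral_neg_eq_zero, sub_eq_zero] at hsplit
    exact hsplit ▸ hleft (-t) (by linarith)
  · rw [integral_undef hint]

theorem integral_Ioi_le_of_monotoneOn_div {f g : ℝ → ℝ} {c a : ℝ}
    (hf : IntegrableOn f (Ioi c)) (hg : IntegrableOn g (Ioi c)) (hfpos : ∀ x ∈ Ioi c, 0 < f x)
    (hmono : MonotoneOn (fun x => g x / f x) (Ioi c))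
    (hmass : ∫ x in Ioi c, f x = ∫ x in Ioi c, g x) (hca : c ≤ a) :
    ∫ x in Ioi a, f x ≤ ∫ x in Ioi a, g x := by
  have hsub : Ioi a ⊆ Ioi c := Ioi_subset_Ioi hca
  by_cases hdom : ∀ x ∈ Ioi a, f x ≤ g x
  · exact setIntegral_mono_on (hf.mono_set hsub) (hg.mono_set hsub) measurableSet_Ioi hdom
  push Not at hdom
  obtain ⟨b, hab, hgb⟩ := hdom
  have hb : b ∈ Ioi c := hsub hab
  have hbelow : ∀ x ∈ Ioc c a, g x ≤ f x := fun x hx => by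
    have hxc : x ∈ Ioi c := hx.1
    have hratio : g x / f x < 1 :=
      (hmono hxc hb (hx.2.trans hab.le)).trans_lt ((div_lt_one (hfpos b hb)).2 hgb)
    exact ((div_lt_one (hfpos x hxc)).1 hratio).le
  have hIoc : ∫ x in Ioc c a, g x ≤ ∫ x in Ioc c a, f x :=
    setIntegral_mono_on (hg.mono_set Ioc_subset_Ioi_self) (hf.mono_set Ioc_subset_Ioi_self)
      measurableSet_Ioc hbelow
  have hsplit : ∀ h : ℝ → ℝ, IntegrableOn h (Ioi c) →
      (∫ x in Ioc c a, h x) + ∫ x in Ioi a, h x = ∫ x in Ioi c, h x := fun h hh => by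
    rw [← setIntegral_union (Ioc_disjoint_Ioi le_rfl) measurableSet_Ioi
      (hh.mono_set Ioc_subset_Ioi_self) (hh.mono_set hsub), Ioc_union_Ioi_eq_Ioi hca]
  linarith [hsplit f hf, hsplit g hg]

section SymmetricDensities

variable {f g : ℝ → ℝ} (hf : IsDensity f) (hfsym : SymmAbout 0 f)
  (hg : IsDensity g) (hgsym : SymmAbout 0 g)
include hf hfsym hg hgsym

theorem LessPrecise.integral_Iic_le (hprec : LessPrecise g f) {u : ℝ} (hu : u ≤ 0) :
    ∫ v in Iic u, f v ≤ ∫ v in Iic u, g v := by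
  rw [hfsym.even.integral_Iic_eq_integral_Ioi_neg, hgsym.even.integral_Iic_eq_integral_Ioi_neg]
  refine integral_Ioi_le_of_monotoneOn_div hf.integrable.integrableOn hg.integrable.integrableOn
    (fun x _ => hf.1 x) hprec ?_ (neg_nonneg.2 hu)
  rw [hf.integral_Ioi_zero_of_even hfsym.even, hg.integral_Ioi_zero_of_even hgsym.even]

theorem odd_integral_Iic_sub_integral_Iic :
    Function.Odd fun u => (∫ v in Iic u, g v) - ∫ v in Iic u, f v := fun u => by
  have hF := hf.integral_Iic_add_integral_Ioi u
  have hG := hg.integral_Iic_add_integral_Ioi u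
  have hFneg := hfsym.even.integral_Iic_eq_integral_Ioi_neg (-u)
  have hGneg := hgsym.even.integral_Iic_eq_integral_Ioi_neg (-u)
  rw [neg_neg] at hFneg hGneg
  dsimp only
  linarith

end SymmetricDensities

theorem lessPrecise_implies_mean_preserving_spread_general
    (f g : ℝ → ℝ)
    (hf : IsDensity f) (hfsym : SymmAbout 0 f)
    (hg : IsDensity g) (hgsym : SymmAbout 0 g)
    (hprec : LessPrecise g f) :
    ∀ t : ℝ,
      0 ≤ ∫ u in Set.Iic t,
        ((∫ v in Set.Iic u, g v) - (∫ v in Set.Iic u, f v)) :=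
  (odd_integral_Iic_sub_integral_Iic hf hfsym hg hgsym).setIntegral_Iic_nonneg fun _ hu =>
    sub_nonneg.2 (hprec.integral_Iic_le hf hfsym hg hgsym hu)

/-- Footnote claim: less precise implies mean-preserving spread (convex order). -/
theorem lessPrecise_implies_mean_preserving_spread
    (f g : ℝ → ℝ)
    (hf : IsDensity f) (hfsym : SymmAbout 0 f) (hfqc : QuasiConcaveFn f)
    (hg : IsDensity g) (hgsym : SymmAbout 0 g) (hgqc : QuasiConcaveFn g)
    (hprec : LessPrecise g f) :
    ∀ t : ℝ,
      0 ≤ ∫ u in Set.Iic t,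
        ((∫ v in Set.Iic u, g v) - (∫ v in Set.Iic u, f v)) :=
  lessPrecise_implies_mean_preserving_spread_general f g hf hfsym hg hgsym hprec
end
end

section
/- Precision order does not follow from adding bounded independent noise to a Cauchy (counterexample). Define R : ℝ → ℝ by R(x) := (1 + x²)·(arctan(x+1) − arctan(x−1)). Then R is not nondecreasing on (0,∞): there exist 0 < x < y with R(x) > R(y). Consequently, the density h(x) = (1/(2π))·(arctan(x+1) − arctan(x−1)) of the sum of a standard Cauchy random variable and an independent uniform random variable on [−1,1] is not less precise than the standard Cauchy density c(x) = 1/(π(1+x²)), since h(x)/c(x) = R(x)/2 is not nondecreasing on (0,∞). -/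
/-!
Since `tan (arctan (x + 1) - arctan (x - 1)) = 2 / x²`, the ratio is
`R x = (1 + x²) · arctan (2 / x²)`, so `R 2 = 5 · arctan (1/2)` and `R 4 = 17 · arctan (1/8)`.
The elementary bounds `t / √(1 + t²) = sin (arctan t) < arctan t < t` give
`R 4 < 17 / 8 < √5 < R 2`.
-/

open Real

namespace Real

lemma arctan_lt_self {t : ℝ} (ht : 0 < t) : arctan t < t := by
  have h := lt_tan (arctan_pos.mpr ht) (arctan_lt_pi_div_two t)
  rwa [tan_arctan] at h

lemma div_sqrt_one_add_sq_lt_arctan {t : ℝ} (ht : 0 < t) : t / √(1 + t ^ 2) < arctan t := by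
  rw [← sin_arctan]
  exact sin_lt (arctan_pos.mpr ht)

lemma arctan_add_one_sub_arctan_sub_one {x : ℝ} (hx : x ≠ 0) :
    arctan (x + 1) - arctan (x - 1) = arctan (2 / x ^ 2) := by
  have hx2 : 0 < x ^ 2 := by positivity
  rw [sub_eq_add_neg, ← arctan_neg, arctan_add (by nlinarith),
    show 1 - (x + 1) * -(x - 1) = x ^ 2 by ring]
  congr 1
  ring

end Real

noncomputable def precisionRatio (x : ℝ) : ℝ :=
  (1 + x ^ 2) * (arctan (x + 1) - arctan (x - 1))

lemma precisionRatio_eq {x : ℝ} (hx : x ≠ 0) :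
    precisionRatio x = (1 + x ^ 2) * arctan (2 / x ^ 2) := by
  rw [precisionRatio, arctan_add_one_sub_arctan_sub_one hx]

lemma precisionRatio_four_lt_two : precisionRatio 4 < precisionRatio 2 := by
  rw [precisionRatio_eq (by norm_num), precisionRatio_eq (by norm_num)]
  have h4 : arctan (1 / 8) < 1 / 8 := arctan_lt_self (by norm_num)
  have h2 : (1 / 2) / √(1 + (1 / 2) ^ 2) < arctan (1 / 2) :=
    div_sqrt_one_add_sq_lt_arctan (by norm_num)
  have hsqrt : (1 / 2 : ℝ) / √(1 + (1 / 2) ^ 2) = √5 / 5 := by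
    rw [show (1 : ℝ) + (1 / 2) ^ 2 = 5 / 2 ^ 2 by norm_num, sqrt_div' _ (by norm_num),
      sqrt_sq (by norm_num)]
    field_simp
    rw [sq_sqrt (by norm_num)]
  have h5 : (17 / 8 : ℝ) < √5 := by
    rw [lt_sqrt (by norm_num)]
    norm_num
  norm_num
  linarith

lemma cauchyUniform_div_cauchy (x : ℝ) :
    (1 / (2 * π) * (arctan (x + 1) - arctan (x - 1))) / (1 / (π * (1 + x ^ 2))) =
      precisionRatio x / 2 := by
  rw [precisionRatio]
  field_simp

/-- Counterexample: the Cauchy-plus-uniform density is not less precise than the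
standard Cauchy density. -/
theorem cauchy_uniform_not_lessPrecise :
    (∃ x y : ℝ, 0 < x ∧ x < y ∧
      (1 + y ^ 2) * (Real.arctan (y + 1) - Real.arctan (y - 1)) <
        (1 + x ^ 2) * (Real.arctan (x + 1) - Real.arctan (x - 1))) ∧
    ¬ MonotoneOn
        (fun x : ℝ =>
          (1 / (2 * Real.pi) * (Real.arctan (x + 1) - Real.arctan (x - 1))) /
            (1 / (Real.pi * (1 + x ^ 2))))
        (Set.Ioi 0) := by
  refine ⟨⟨2, 4, by norm_num, by norm_num, precisionRatio_four_lt_two⟩, fun hmono => ?_⟩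
  have h := hmono (a := 2) (b := 4) (by norm_num) (by norm_num) (by norm_num)
  simp only [cauchyUniform_div_cauchy] at h
  linarith [precisionRatio_four_lt_two]
end
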